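/- arXiv:2412.20045 — 4 statements merged into one kernel-verified Lean document; each statement's English description precedes it below -/
import Mathlib

section
/- For a one-dimensional exponential family, the posterior mean satisfies Tweedie's formula: if p(y|η) = p₀(y)·exp(η·T(y) − φ(η)) and p(y) = ∫ p(y|η) p(η) dη, then T'(y) · E[η|y] = d/dy log p(y) − d/dy log p₀(y). -/
open Real MeasureTheory

/-- Tweedie's formula for a one-dimensional exponential family:
`T'(y) · E[η|y] = (log p)'(y) − (log p₀)'(y)`. -/
theorem tweedie_posterior_mean
    (p0 T φ pr : ℝ → ℝ)
    (hp0pos : ∀ y, 0 < p0 y)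
    (hp0diff : Differentiable ℝ p0)
    (hTdiff : Differentiable ℝ T)
    (p : ℝ → ℝ)
    (hp : ∀ y, p y = ∫ η, p0 y * Real.exp (η * T y - φ η) * pr η)
    (hppos : ∀ y, 0 < p y)
    (hpdiff : Differentiable ℝ p)
    (hinter : ∀ y, deriv p y =
      ∫ η, deriv (fun y => p0 y * Real.exp (η * T y - φ η)) y * pr η)
    (hint0 : ∀ y, Integrable (fun η => p0 y * Real.exp (η * T y - φ η) * pr η))
    (hint1 : ∀ y, Integrable (fun η => η * (p0 y * Real.exp (η * T y - φ η) * pr η)))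
    (E : ℝ → ℝ)
    (hE : ∀ y, E y = (∫ η, η * (p0 y * Real.exp (η * T y - φ η) * pr η)) / p y)
    (y : ℝ) :
    deriv T y * E y =
      deriv (fun y => Real.log (p y)) y - deriv (fun y => Real.log (p0 y)) y := by
  have hp0 := hp0pos y
  have hpy := hppos y
  set c := deriv p0 y with hc
  set a := deriv T y with ha
  have hderiv : ∀ η : ℝ, deriv (fun y => p0 y * Real.exp (η * T y - φ η)) y
      = c * Real.exp (η * T y - φ η) + p0 y * (Real.exp (η * T y - φ η) * (η * a)) := by
    intro η
    have h1 : HasDerivAt (fun y => η * T y - φ η) (η * a) y := by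
      simpa using ((hTdiff y).hasDerivAt.const_mul η).sub_const (φ η)
    have h2 : HasDerivAt (fun y => Real.exp (η * T y - φ η))
        (Real.exp (η * T y - φ η) * (η * a)) y := h1.exp
    exact ((hp0diff y).hasDerivAt.mul h2).deriv
  have hkey : deriv p y = (c / p0 y) * p y
      + a * (∫ η, η * (p0 y * Real.exp (η * T y - φ η) * pr η)) := by
    rw [hinter y]
    have heq : (fun η => deriv (fun y => p0 y * Real.exp (η * T y - φ η)) y * pr η)
        = fun η => (c / p0 y) * (p0 y * Real.exp (η * T y - φ η) * pr η)
            + a * (η * (p0 y * Real.exp (η * T y - φ η) * pr η)) := by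
      funext η
      rw [hderiv η]
      field_simp
    rw [heq, integral_add ((hint0 y).const_mul _) ((hint1 y).const_mul a),
        integral_const_mul, integral_const_mul, ← hp y]
  have hlogp : deriv (fun y => Real.log (p y)) y = deriv p y / p y :=
    ((hpdiff y).hasDerivAt.log hpy.ne').deriv
  have hlogp0 : deriv (fun y => Real.log (p0 y)) y = c / p0 y :=
    ((hp0diff y).hasDerivAt.log hp0.ne').deriv
  rw [hE y, hlogp, hlogp0, hkey]
  generalize (∫ η, η * (p0 y * Real.exp (η * T y - φ η) * pr η)) = I
  field_simp
  ring
end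

section
/- For a one-dimensional exponential family, the posterior variance satisfies (T'(y))² · Var(η|y) = d²/dy² log p(y) − d²/dy² log p₀(y) − T''(y) · E[η|y]. -/
open Real MeasureTheory

lemma log_deriv2_aux (g : ℝ → ℝ) (hg : Differentiable ℝ g)
    (hg2 : Differentiable ℝ (deriv g)) (hpos : ∀ x, 0 < g x) (y : ℝ) :
    deriv (deriv (fun x => Real.log (g x))) y
      = (deriv (deriv g) y * g y - (deriv g y) ^ 2) / (g y) ^ 2 := by
  have h1 : deriv (fun x => Real.log (g x)) = fun x => deriv g x / g x := by
    funext x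
    exact (((hg x).hasDerivAt).log (hpos x).ne').deriv
  rw [h1, show (fun x => deriv g x / g x) = deriv g / g from rfl, (((hg2 y).hasDerivAt).div ((hg y).hasDerivAt) (hpos y).ne').deriv]
  ring

/-- Posterior variance formula for a one-dimensional exponential family:
`(T'(y))² · Var(η|y) = (log p)''(y) − (log p₀)''(y) − T''(y) · E[η|y]`. -/
theorem tweedie_posterior_variance
    (p0 T φ pr : ℝ → ℝ)
    (hp0pos : ∀ y, 0 < p0 y)
    (hp0diff : Differentiable ℝ p0) (hp0diff2 : Differentiable ℝ (deriv p0))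
    (hTdiff : Differentiable ℝ T) (hTdiff2 : Differentiable ℝ (deriv T))
    (p : ℝ → ℝ)
    (hp : ∀ y, p y = ∫ η, p0 y * Real.exp (η * T y - φ η) * pr η)
    (hppos : ∀ y, 0 < p y)
    (hpdiff : Differentiable ℝ p) (hpdiff2 : Differentiable ℝ (deriv p))
    (hinter1 : ∀ y, deriv p y =
      ∫ η, deriv (fun y => p0 y * Real.exp (η * T y - φ η)) y * pr η)
    (hinter2 : ∀ y, deriv (deriv p) y =
      ∫ η, deriv (deriv (fun y => p0 y * Real.exp (η * T y - φ η))) y * pr η)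
    (hint0 : ∀ y, Integrable (fun η => p0 y * Real.exp (η * T y - φ η) * pr η))
    (hint1 : ∀ y, Integrable (fun η => η * (p0 y * Real.exp (η * T y - φ η) * pr η)))
    (hint2 : ∀ y, Integrable (fun η => η ^ 2 * (p0 y * Real.exp (η * T y - φ η) * pr η)))
    (E E2 V : ℝ → ℝ)
    (hE : ∀ y, E y = (∫ η, η * (p0 y * Real.exp (η * T y - φ η) * pr η)) / p y)
    (hE2 : ∀ y, E2 y = (∫ η, η ^ 2 * (p0 y * Real.exp (η * T y - φ η) * pr η)) / p y)
    (hV : ∀ y, V y = E2 y - (E y) ^ 2)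
    (y : ℝ) :
    (deriv T y) ^ 2 * V y =
      deriv (deriv (fun y => Real.log (p y))) y
        - deriv (deriv (fun y => Real.log (p0 y))) y
        - deriv (deriv T) y * E y := by
  have hp0ne : p0 y ≠ 0 := (hp0pos y).ne'
  have hpne : p y ≠ 0 := (hppos y).ne'
  set c := deriv p0 y / p0 y with hc
  set d := deriv (deriv p0) y / p0 y with hd
  have hD1 : ∀ η : ℝ, deriv (fun y => p0 y * Real.exp (η * T y - φ η))
      = fun x => (deriv p0 x + p0 x * (η * deriv T x)) * Real.exp (η * T x - φ η) := by
    intro η; funext x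
    have he : HasDerivAt (fun y => Real.exp (η * T y - φ η))
        (Real.exp (η * T x - φ η) * (η * deriv T x)) x :=
      (((hTdiff x).hasDerivAt.const_mul η).sub_const _).exp
    rw [show (fun y => p0 y * Real.exp (η * T y - φ η)) = p0 * fun y => Real.exp (η * T y - φ η) from rfl,
      ((hp0diff x).hasDerivAt.mul he).deriv]
    ring
  have hD2 : ∀ η : ℝ, deriv (deriv (fun y => p0 y * Real.exp (η * T y - φ η))) y
      = (deriv (deriv p0) y + 2 * deriv p0 y * (η * deriv T y)
          + p0 y * (η * deriv (deriv T) y) + p0 y * (η * deriv T y) ^ 2)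
        * Real.exp (η * T y - φ η) := by
    intro η
    rw [hD1 η]
    have he : HasDerivAt (fun x => Real.exp (η * T x - φ η))
        (Real.exp (η * T y - φ η) * (η * deriv T y)) y :=
      (((hTdiff y).hasDerivAt.const_mul η).sub_const _).exp
    have h1 : HasDerivAt (fun x => (deriv p0 x + p0 x * (η * deriv T x)))
        (deriv (deriv p0) y
          + (deriv p0 y * (η * deriv T y) + p0 y * (η * deriv (deriv T) y))) y :=
      (hp0diff2 y).hasDerivAt.add
        ((hp0diff y).hasDerivAt.mul ((hTdiff2 y).hasDerivAt.const_mul η))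
    rw [show (fun x => (deriv p0 x + p0 x * (η * deriv T x)) * Real.exp (η * T x - φ η)) = (fun x => (deriv p0 x + p0 x * (η * deriv T x))) * fun x => Real.exp (η * T x - φ η) from rfl,
      (h1.mul he).deriv]
    ring
  have hp' : deriv p y = c * p y
      + deriv T y * ∫ η, η * (p0 y * Real.exp (η * T y - φ η) * pr η) := by
    rw [hinter1 y]
    have heq : (fun η => deriv (fun y => p0 y * Real.exp (η * T y - φ η)) y * pr η)
        = fun η => c * (p0 y * Real.exp (η * T y - φ η) * pr η)
          + deriv T y * (η * (p0 y * Real.exp (η * T y - φ η) * pr η)) := by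
      funext η; rw [hD1 η]; simp only [hc]; field_simp
    rw [heq, integral_add ((hint0 y).const_mul c) ((hint1 y).const_mul (deriv T y)),
      integral_const_mul, integral_const_mul, ← hp y]
  have hp'' : deriv (deriv p) y = d * p y
      + (2 * c * deriv T y + deriv (deriv T) y)
        * (∫ η, η * (p0 y * Real.exp (η * T y - φ η) * pr η))
      + (deriv T y) ^ 2 * (∫ η, η ^ 2 * (p0 y * Real.exp (η * T y - φ η) * pr η)) := by
    rw [hinter2 y]
    have heq : (fun η => deriv (deriv (fun y => p0 y * Real.exp (η * T y - φ η))) y * pr η)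
        = fun η => d * (p0 y * Real.exp (η * T y - φ η) * pr η)
          + (2 * c * deriv T y + deriv (deriv T) y)
            * (η * (p0 y * Real.exp (η * T y - φ η) * pr η))
          + (deriv T y) ^ 2 * (η ^ 2 * (p0 y * Real.exp (η * T y - φ η) * pr η)) := by
      funext η; rw [hD2 η]; simp only [hc, hd]; field_simp; ring
    have i01 : Integrable (fun η => d * (p0 y * Real.exp (η * T y - φ η) * pr η)
        + (2 * c * deriv T y + deriv (deriv T) y)
          * (η * (p0 y * Real.exp (η * T y - φ η) * pr η))) :=
      ((hint0 y).const_mul d).add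
        ((hint1 y).const_mul (2 * c * deriv T y + deriv (deriv T) y))
    rw [heq,
      integral_add i01 ((hint2 y).const_mul _),
      integral_add ((hint0 y).const_mul d) ((hint1 y).const_mul _),
      integral_const_mul, integral_const_mul, integral_const_mul, ← hp y]
  rw [hV y, hE2 y, hE y,
    log_deriv2_aux p hpdiff hpdiff2 hppos y,
    log_deriv2_aux p0 hp0diff hp0diff2 hp0pos y,
    hp', hp'']
  simp only [hc, hd]
  field_simp
  rw [show (fun η => η ^ 2 * p0 y * Real.exp (η * T y - φ η) * pr η)
      = fun η => p0 y * η ^ 2 * Real.exp (T y * η - φ η) * pr η from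
      funext fun η => by ring_nf]
  ring
end

section
/- In the one-dimensional DDPM setting, the posterior variance satisfies Var(x₀|x_t) = ((1−ᾱ)/ᾱ)·(1 + (1−ᾱ)·d²/dx_t² log p_t(x_t)). -/
open Real MeasureTheory

/-- Posterior variance in the one-dimensional DDPM setting:
`Var(x₀|x_t) = ((1−ᾱ)/ᾱ)(1 + (1−ᾱ)(log p_t)''(x_t))`. -/
theorem ddpm_posterior_variance
    (α : ℝ) (hα : 0 < α) (hα1 : α < 1)
    (pr : ℝ → ℝ)
    (k : ℝ → ℝ → ℝ)
    (hk : ∀ x x0, k x x0 =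
      (2 * π * (1 - α)) ^ (-(1 : ℝ) / 2) *
        Real.exp (-(x - Real.sqrt α * x0) ^ 2 / (2 * (1 - α))))
    (p : ℝ → ℝ) (hp : ∀ x, p x = ∫ x0, k x x0 * pr x0)
    (hppos : ∀ x, 0 < p x)
    (hpdiff : Differentiable ℝ p) (hpdiff2 : Differentiable ℝ (deriv p))
    (hinter1 : ∀ x, deriv p x = ∫ x0, deriv (fun x => k x x0) x * pr x0)
    (hinter2 : ∀ x, deriv (deriv p) x =
      ∫ x0, deriv (deriv (fun x => k x x0)) x * pr x0)
    (hint0 : ∀ x, Integrable (fun x0 => k x x0 * pr x0))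
    (hint1 : ∀ x, Integrable (fun x0 => x0 * (k x x0 * pr x0)))
    (hint2 : ∀ x, Integrable (fun x0 => x0 ^ 2 * (k x x0 * pr x0)))
    (E E2 V : ℝ → ℝ)
    (hE : ∀ x, E x = (∫ x0, x0 * (k x x0 * pr x0)) / p x)
    (hE2 : ∀ x, E2 x = (∫ x0, x0 ^ 2 * (k x x0 * pr x0)) / p x)
    (hV : ∀ x, V x = E2 x - (E x) ^ 2)
    (x : ℝ) :
    V x = ((1 - α) / α) *
      (1 + (1 - α) * deriv (deriv (fun x => Real.log (p x))) x) := by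
  have hα' : (1 : ℝ) - α ≠ 0 := by linarith
  have hα0 : α ≠ 0 := hα.ne'
  set s := Real.sqrt α with hs_def
  have hs2 : s ^ 2 = α := Real.sq_sqrt hα.le
  have hs0 : s ≠ 0 := (Real.sqrt_pos.mpr hα).ne'
  -- first derivative of the kernel
  have hk1 : ∀ x0 y, HasDerivAt (fun x => k x x0) ((s * x0 - y) / (1 - α) * k y x0) y := by
    intro x0 y
    have hfun : (fun x => k x x0) = fun x =>
        (2 * π * (1 - α)) ^ (-(1 : ℝ) / 2) *
          Real.exp (-(x - s * x0) ^ 2 / (2 * (1 - α))) := by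
      funext z; rw [hk]
    rw [hfun]
    have h2 : HasDerivAt (fun x : ℝ => -(x - s * x0) ^ 2 / (2 * (1 - α)))
        (-(2 * (y - s * x0)) / (2 * (1 - α))) y := by
      have hx : HasDerivAt (fun x : ℝ => x - s * x0) 1 y := (hasDerivAt_id y).sub_const _
      have := (hx.pow 2).neg.div_const (2 * (1 - α))
      simpa using this
    have h3 := (h2.exp).const_mul ((2 * π * (1 - α)) ^ (-(1 : ℝ) / 2))
    exact h3.congr_deriv (by
      rw [hk]
      field_simp
      ring)
  have hk1' : ∀ x0, deriv (fun x => k x x0) = fun y => (s * x0 - y) / (1 - α) * k y x0 :=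
    fun x0 => funext fun y => (hk1 x0 y).deriv
  -- second derivative of the kernel
  have hk2 : ∀ x0 y, deriv (deriv (fun x => k x x0)) y =
      (((s * x0 - y) / (1 - α)) ^ 2 - 1 / (1 - α)) * k y x0 := by
    intro x0 y
    rw [hk1' x0]
    have hg : HasDerivAt (fun z : ℝ => (s * x0 - z) / (1 - α)) (-1 / (1 - α)) y := by
      have h : HasDerivAt (fun z : ℝ => s * x0 - z) (0 - 1) y :=
        (hasDerivAt_const y (s * x0)).sub (hasDerivAt_id y)
      simpa using h.div_const (1 - α)
    rw [(show HasDerivAt (fun z => (s * x0 - z) / (1 - α) * k z x0) _ y from hg.mul (hk1 x0 y)).deriv]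
    ring
  -- first derivative of p as moments
  have key1 : deriv p x = s / (1 - α) * (∫ x0, x0 * (k x x0 * pr x0))
      - x / (1 - α) * (∫ x0, k x x0 * pr x0) := by
    rw [hinter1 x]
    have heq : (fun x0 => deriv (fun x => k x x0) x * pr x0)
        = fun x0 => s / (1 - α) * (x0 * (k x x0 * pr x0))
            - x / (1 - α) * (k x x0 * pr x0) := by
      funext x0
      rw [(hk1 x0 x).deriv]
      field_simp
    rw [heq, integral_sub ((hint1 x).const_mul _) ((hint0 x).const_mul _),
        integral_const_mul, integral_const_mul]
  -- second derivative of p as moments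
  have key2 : deriv (deriv p) x =
      α / (1 - α) ^ 2 * (∫ x0, x0 ^ 2 * (k x x0 * pr x0))
      - 2 * s * x / (1 - α) ^ 2 * (∫ x0, x0 * (k x x0 * pr x0))
      + (x ^ 2 / (1 - α) ^ 2 - 1 / (1 - α)) * (∫ x0, k x x0 * pr x0) := by
    rw [hinter2 x]
    have heq : (fun x0 => deriv (deriv (fun x => k x x0)) x * pr x0)
        = fun x0 => α / (1 - α) ^ 2 * (x0 ^ 2 * (k x x0 * pr x0))
            - 2 * s * x / (1 - α) ^ 2 * (x0 * (k x x0 * pr x0))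
            + (x ^ 2 / (1 - α) ^ 2 - 1 / (1 - α)) * (k x x0 * pr x0) := by
      funext x0
      rw [hk2 x0 x, ← hs2]
      field_simp
      ring
    have ha : Integrable (fun x0 => α / (1 - α) ^ 2 * (x0 ^ 2 * (k x x0 * pr x0))
        - 2 * s * x / (1 - α) ^ 2 * (x0 * (k x x0 * pr x0))) volume :=
      ((hint2 x).const_mul _).sub ((hint1 x).const_mul _)
    rw [heq,
        integral_add ha ((hint0 x).const_mul _),
        integral_sub ((hint2 x).const_mul _) ((hint1 x).const_mul _),
        integral_const_mul, integral_const_mul, integral_const_mul]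
  -- second derivative of log p
  have hlog1 : deriv (fun y => Real.log (p y)) = fun y => deriv p y / p y :=
    funext fun y => (((hpdiff y).hasDerivAt).log (hppos y).ne').deriv
  have hlog2 : deriv (deriv (fun y => Real.log (p y))) x =
      (deriv (deriv p) x * p x - deriv p x * deriv p x) / (p x) ^ 2 := by
    rw [hlog1]
    exact (((hpdiff2 x).hasDerivAt).div ((hpdiff x).hasDerivAt) (hppos x).ne').deriv
  -- put everything together
  rw [hV, hE, hE2, hlog2, key1, key2, hp x]
  set I0 := ∫ x0, k x x0 * pr x0 with hI0
  set I1 := ∫ x0, x0 * (k x x0 * pr x0) with hI1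
  set I2 := ∫ x0, x0 ^ 2 * (k x x0 * pr x0) with hI2
  have hI0ne : I0 ≠ 0 := by
    have h := hppos x
    rw [hp x] at h
    exact h.ne'
  rw [← hs2]
  have h1s : (1 : ℝ) - s ^ 2 ≠ 0 := by rw [hs2]; exact hα'
  field_simp [hs0, hI0ne, h1s]
  ring
end

section
/- In the one-dimensional DDPM setting, the second logarithmic derivative of the marginal satisfies d²/dx_t² log p_t(x_t) ≥ −1/(1−ᾱ); equivalently, 1 + (1−ᾱ)·d²/dx_t² log p_t(x_t) ≥ 0. -/
open Real MeasureTheory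

lemma gauss_hasDerivAt (C b s : ℝ) (hs : s ≠ 0) (x : ℝ) :
    HasDerivAt (fun x => C * Real.exp (-(x - b)^2 / (2*s)))
      (C * Real.exp (-(x - b)^2 / (2*s)) * (-(x - b)/s)) x := by
  have h0 : HasDerivAt (fun x : ℝ => -(x - b)^2 / (2*s)) (-(x - b)/s) x := by
    have h1 : HasDerivAt (fun x : ℝ => x - b) 1 x := (hasDerivAt_id x).sub_const b
    have h2 := (h1.pow 2).neg.div_const (2*s)
    refine h2.congr_deriv ?_
    field_simp
    ring
  have h3 := (h0.exp).const_mul C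
  refine h3.congr_deriv ?_
  ring

lemma gauss_hasDerivAt2 (C b s : ℝ) (hs : s ≠ 0) (x : ℝ) :
    HasDerivAt (fun x => C * Real.exp (-(x - b)^2 / (2*s)) * (-(x - b)/s))
      (C * Real.exp (-(x - b)^2 / (2*s)) * ((x - b)^2/s^2 - 1/s)) x := by
  have h1 := gauss_hasDerivAt C b s hs x
  have h2 : HasDerivAt (fun x : ℝ => -(x - b)/s) (-1/s) x := by
    have := ((hasDerivAt_id x).sub_const b).neg.div_const s
    refine this.congr_deriv ?_
    ring
  have h3 := h1.mul h2
  refine h3.congr_deriv ?_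
  field_simp
  ring

lemma integral_add3 {f g h : ℝ → ℝ} (hf : Integrable f) (hg : Integrable g)
    (hh : Integrable h) :
    ∫ x, (f x + (g x + h x)) = (∫ x, f x) + ((∫ x, g x) + ∫ x, h x) := by
  have h1 := integral_add hf (hg.add hh)
  simp only [Pi.add_apply] at h1
  rw [h1, integral_add hg hh]

/-- In the one-dimensional DDPM setting, the second logarithmic derivative of the
marginal satisfies `(log p_t)''(x_t) ≥ −1/(1−ᾱ)`; equivalently
`1 + (1−ᾱ)(log p_t)''(x_t) ≥ 0`. -/
theorem ddpm_log_marginal_second_deriv_lower_bound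
    (α : ℝ) (hα : 0 < α) (hα1 : α < 1)
    (pr : ℝ → ℝ) (hpr : ∀ x0, 0 ≤ pr x0)
    (k : ℝ → ℝ → ℝ)
    (hk : ∀ x x0, k x x0 =
      (2 * π * (1 - α)) ^ (-(1 : ℝ) / 2) *
        Real.exp (-(x - Real.sqrt α * x0) ^ 2 / (2 * (1 - α))))
    (p : ℝ → ℝ) (hp : ∀ x, p x = ∫ x0, k x x0 * pr x0)
    (hppos : ∀ x, 0 < p x)
    (hpdiff : Differentiable ℝ p) (hpdiff2 : Differentiable ℝ (deriv p))
    (hinter1 : ∀ x, deriv p x = ∫ x0, deriv (fun x => k x x0) x * pr x0)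
    (hinter2 : ∀ x, deriv (deriv p) x =
      ∫ x0, deriv (deriv (fun x => k x x0)) x * pr x0)
    (hint0 : ∀ x, Integrable (fun x0 => k x x0 * pr x0))
    (hint1 : ∀ x, Integrable (fun x0 => x0 * (k x x0 * pr x0)))
    (hint2 : ∀ x, Integrable (fun x0 => x0 ^ 2 * (k x x0 * pr x0)))
    (x : ℝ) :
    deriv (deriv (fun x => Real.log (p x))) x ≥ -(1 / (1 - α)) ∧
      1 + (1 - α) * deriv (deriv (fun x => Real.log (p x))) x ≥ 0 := by
  set s : ℝ := 1 - α with hs_def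
  have hs : 0 < s := by simp [hs_def]; linarith
  have hsne : s ≠ 0 := hs.ne'
  set C : ℝ := (2 * π * (1 - α)) ^ (-(1 : ℝ) / 2) with hC_def
  set a : ℝ := Real.sqrt α with ha_def
  have ha2 : a ^ 2 = α := Real.sq_sqrt hα.le
  have hfun : ∀ x0 : ℝ, (fun x => k x x0) =
      fun x => C * Real.exp (-(x - a * x0) ^ 2 / (2 * s)) := by
    intro x0; funext y; rw [hk y x0]
  -- first derivative of the kernel
  have hd1 : ∀ x0 y : ℝ, deriv (fun x => k x x0) y = k y x0 * (-(y - a * x0) / s) := by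
    intro x0 y
    rw [hfun x0, (gauss_hasDerivAt C (a * x0) s hsne y).deriv, ← hk y x0]
  -- second derivative of the kernel
  have hd2 : ∀ x0 y : ℝ, deriv (deriv (fun x => k x x0)) y =
      k y x0 * ((y - a * x0) ^ 2 / s ^ 2 - 1 / s) := by
    intro x0 y
    have h1 : deriv (fun x => k x x0) =
        fun y => C * Real.exp (-(y - a * x0) ^ 2 / (2 * s)) * (-(y - a * x0) / s) := by
      funext z
      rw [hfun x0, (gauss_hasDerivAt C (a * x0) s hsne z).deriv]
    rw [h1, (gauss_hasDerivAt2 C (a * x0) s hsne y).deriv, ← hk y x0]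
  set I1 : ℝ := ∫ x0, x0 * (k x x0 * pr x0) with hI1_def
  set I2 : ℝ := ∫ x0, x0 ^ 2 * (k x x0 * pr x0) with hI2_def
  set P : ℝ := p x with hP_def
  have hP : 0 < P := hppos x
  -- first derivative of p
  have hp1 : deriv p x = -(x / s) * P + (a / s) * I1 := by
    rw [hinter1 x]
    have heq : (fun x0 => deriv (fun x => k x x0) x * pr x0) =
        fun x0 => (-(x / s)) * (k x x0 * pr x0) + (a / s) * (x0 * (k x x0 * pr x0)) := by
      funext x0
      rw [hd1 x0 x]
      field_simp
      ring
    rw [heq, integral_add ((hint0 x).const_mul _) ((hint1 x).const_mul _),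
      integral_const_mul, integral_const_mul, ← hp x]
  -- second derivative of p
  have hp2 : deriv (deriv p) x =
      (x ^ 2 / s ^ 2 - 1 / s) * P + (-(2 * x * a) / s ^ 2) * I1 + (a ^ 2 / s ^ 2) * I2 := by
    rw [hinter2 x]
    have heq : (fun x0 => deriv (deriv (fun x => k x x0)) x * pr x0) =
        fun x0 => (x ^ 2 / s ^ 2 - 1 / s) * (k x x0 * pr x0) +
          ((-(2 * x * a) / s ^ 2) * (x0 * (k x x0 * pr x0)) +
            (a ^ 2 / s ^ 2) * (x0 ^ 2 * (k x x0 * pr x0))) := by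
      funext x0
      rw [hd2 x0 x]
      field_simp
      ring
    rw [heq, integral_add3 ((hint0 x).const_mul _) ((hint1 x).const_mul _)
        ((hint2 x).const_mul _),
      integral_const_mul, integral_const_mul, integral_const_mul, ← hp x]
    ring
  -- log derivative
  have hL1 : deriv (fun x => Real.log (p x)) = fun y => deriv p y / p y := by
    funext y
    exact (((hpdiff y).hasDerivAt).log (hppos y).ne').deriv
  have hL2 : deriv (deriv (fun x => Real.log (p x))) x =
      (deriv (deriv p) x * p x - deriv p x * deriv p x) / (p x) ^ 2 := by
    rw [hL1, deriv_fun_div (hpdiff2 x) (hpdiff x) (hppos x).ne']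
  -- variance nonnegativity
  have hkpr : ∀ x0, 0 ≤ k x x0 * pr x0 := by
    intro x0
    refine mul_nonneg ?_ (hpr x0)
    rw [hk x x0]
    have hb : (0:ℝ) ≤ 2 * π * (1 - α) := by positivity
    positivity
  set m : ℝ := I1 / P with hm_def
  have hvar : 0 ≤ ∫ x0, (x0 - m) ^ 2 * (k x x0 * pr x0) :=
    integral_nonneg fun x0 => mul_nonneg (sq_nonneg _) (hkpr x0)
  have hvar2 : (∫ x0, (x0 - m) ^ 2 * (k x x0 * pr x0)) =
      I2 + ((-(2 * m)) * I1 + m ^ 2 * P) := by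
    have heq : (fun x0 => (x0 - m) ^ 2 * (k x x0 * pr x0)) =
        fun x0 => x0 ^ 2 * (k x x0 * pr x0) +
          ((-(2 * m)) * (x0 * (k x x0 * pr x0)) + m ^ 2 * (k x x0 * pr x0)) := by
      funext x0; ring
    rw [heq, integral_add3 (hint2 x) ((hint1 x).const_mul _) ((hint0 x).const_mul _),
      integral_const_mul, integral_const_mul, ← hp x]
  have hkey : 0 ≤ I2 * P - I1 ^ 2 := by
    have h1 : 0 ≤ I2 + ((-(2 * m)) * I1 + m ^ 2 * P) := hvar2 ▸ hvar
    have h2 : (I2 + ((-(2 * m)) * I1 + m ^ 2 * P)) * P = I2 * P - I1 ^ 2 := by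
      rw [hm_def]; field_simp; ring
    nlinarith [mul_nonneg h1 hP.le]
  -- final computation
  have hQ : deriv (deriv (fun x => Real.log (p x))) x =
      -1 / s + (a ^ 2 / s ^ 2) * (I2 * P - I1 ^ 2) / P ^ 2 := by
    rw [hL2, hp1, hp2, ← hP_def]
    field_simp
    ring
  have hnn : 0 ≤ (a ^ 2 / s ^ 2) * (I2 * P - I1 ^ 2) / P ^ 2 :=
    div_nonneg (mul_nonneg (by positivity) hkey) (by positivity)
  constructor
  · rw [hQ]
    have : -(1 / (1 - α)) = -1 / s := by rw [hs_def]; ring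
    linarith [this ▸ le_refl (-(1 / (1 - α)))]
  · rw [hQ]
    have hcalc : 1 + (1 - α) * (-1 / s + (a ^ 2 / s ^ 2) * (I2 * P - I1 ^ 2) / P ^ 2) =
        s * ((a ^ 2 / s ^ 2) * (I2 * P - I1 ^ 2) / P ^ 2) := by
      rw [hs_def] at hsne ⊢
      field_simp
      ring
    rw [hcalc]
    positivity
end
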